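/- arXiv:1903.07225 — 2 statements merged into one kernel-verified Lean document; each statement's English description precedes it below -/
import Mathlib

section
/- Let 𝒪 = ℤe₁ + ℤe₂ + ℤe₃ + ℤe₄ ⊂ B. With μ = I, the set μ^⊥ = {β ∈ 𝒪 : tr(β·μ̄) = 0} equals ℤ·1 + ℤe₃ + ℤe₄, and for all integers x, y one has tr(xe₃ + ye₄)² − 4·nr(xe₃ + ye₄) = 4p x² + 4sDN xy + 4tDN y². In particular the quadratic form Q_μ(x, y) = disc(xe₃ + ye₄) equals 4px² + 4sDNxy + 4tDNy². -/
/-!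
Since `Ī = -I` and `I² = -DN`, the trace form `β ↦ tr(β Ī)` is `2DN` times the `I`-coordinate of `β`.
Among `e₁, …, e₄` only `e₂` has a nonzero `I`-coordinate, so the `ℤ`-combinations orthogonal to `I`
are exactly those with no `e₂`-component.
-/

open Quaternion

/-- The reduced trace `tr(α) = α + ᾱ = 2·re(α)` on `B = (−DN, p / ℚ)`. -/
def qtr {a b : ℚ} (α : ℍ[ℚ, a, b]) : ℚ := 2 * α.re

/-- The reduced norm `nr(α) = αᾱ = x² + DNy² − pz² − DNpw²` on `B = (−DN, p / ℚ)`,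
for `α = x + yI + zJ + wIJ`. -/
def qnr (D N p : ℕ) (α : ℍ[ℚ, -((D:ℚ)*N), (p:ℚ)]) : ℚ :=
  α.re ^ 2 + (D:ℚ) * N * α.imI ^ 2 - (p:ℚ) * α.imJ ^ 2 - (D:ℚ) * N * p * α.imK ^ 2

theorem Submodule.span_insert_inf_ker_eq {R M N : Type*} [Semiring R] [IsCancelMulZero R]
    [AddCommMonoid M] [Module R M] [AddCommMonoid N] [Module R N] [Module.IsTorsionFree R N]
    {f : M →ₗ[R] N} {v : M} {S : Set M} (hv : f v ≠ 0) (hS : ∀ s ∈ S, f s = 0) :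
    Submodule.span R (insert v S) ⊓ LinearMap.ker f = Submodule.span R S := by
  have hSker : Submodule.span R S ≤ LinearMap.ker f := Submodule.span_le.mpr hS
  refine le_antisymm ?_ (le_inf (Submodule.span_mono (Set.subset_insert v S)) hSker)
  rintro β ⟨hβ, hfβ⟩
  obtain ⟨a, z, hz, rfl⟩ := Submodule.mem_span_insert.mp hβ
  have ha : a = 0 := by
    simpa [LinearMap.mem_ker.mp (hSker hz), hv] using LinearMap.mem_ker.mp hfβ
  simpa [ha] using hz

theorem qtr_mul_star_I {a b : ℚ} (β : ℍ[ℚ, a, b]) :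
    qtr (β * star (⟨0, 1, 0, 0⟩ : ℍ[ℚ, a, b])) = -2 * a * β.imI := by
  simp only [qtr, QuaternionAlgebra.re_mul, QuaternionAlgebra.star_mk]
  ring

-- `x e₃ + y e₄ = (x + sDNy/2p) J + (y/2p) IJ`; the relation `4pt = s²DN + 1` collapses the `y²` term.
theorem qtr_sq_sub_four_mul_qnr_smul_add_smul (D N p : ℕ) (s t : ℤ) (hp : (p : ℚ) ≠ 0)
    (ht : 4 * (p : ℤ) * t = s ^ 2 * D * N + 1) {e₃ e₄ : ℍ[ℚ, -((D:ℚ)*N), (p:ℚ)]}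
    (he₃ : e₃ = ⟨0, 0, 1, 0⟩) (he₄ : e₄ = ⟨0, 0, (s:ℚ)*D*N/(2*p), 1/(2*p)⟩) (x y : ℤ) :
    qtr (x • e₃ + y • e₄) ^ 2 - 4 * qnr D N p (x • e₃ + y • e₄)
      = 4 * (p:ℚ) * x ^ 2 + 4 * s * D * N * (x * y) + 4 * t * D * N * y ^ 2 := by
  have htQ : 4 * (p:ℚ) * t = s ^ 2 * D * N + 1 := by exact_mod_cast ht
  simp only [qtr, qnr, he₃, he₄, QuaternionAlgebra.re_add, QuaternionAlgebra.imI_add,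
    QuaternionAlgebra.imJ_add, QuaternionAlgebra.imK_add, QuaternionAlgebra.re_smul,
    QuaternionAlgebra.imI_smul, QuaternionAlgebra.imJ_smul, QuaternionAlgebra.imK_smul,
    zsmul_eq_mul (α := ℚ)]
  field_simp
  linear_combination (-4 * (D:ℚ) * N * y ^ 2) * htQ

theorem stmt6_general (D N p : ℕ) (hD : 0 < D) (hN : 0 < N)
    (hp : p.Prime)
    (s t : ℤ) (ht : 4 * (p : ℤ) * t = s ^ 2 * D * N + 1)
    (e₁ e₂ e₃ e₄ μ : ℍ[ℚ, -((D:ℚ)*N), (p:ℚ)])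
    (he₁ : e₁ = 1)
    (he₂ : e₂ = ⟨1/2, 1/2, 0, 0⟩)
    (he₃ : e₃ = ⟨0, 0, 1, 0⟩)
    (he₄ : e₄ = ⟨0, 0, (s:ℚ)*D*N/(2*p), 1/(2*p)⟩)
    (hμ : μ = ⟨0, 1, 0, 0⟩) :
    {β : ℍ[ℚ, -((D:ℚ)*N), (p:ℚ)] |
        β ∈ Submodule.span ℤ ({e₁, e₂, e₃, e₄} : Set _) ∧ qtr (β * star μ) = 0}
      = (Submodule.span ℤ ({1, e₃, e₄} : Set (ℍ[ℚ, -((D:ℚ)*N), (p:ℚ)])) : Set _) ∧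
    ∀ x y : ℤ, qtr (x • e₃ + y • e₄) ^ 2 - 4 * qnr D N p (x • e₃ + y • e₄)
      = 4 * (p:ℚ) * x ^ 2 + 4 * s * D * N * (x * y) + 4 * t * D * N * y ^ 2 := by
  refine ⟨?_, qtr_sq_sub_four_mul_qnr_smul_add_smul D N p s t
    (Nat.cast_ne_zero.mpr hp.ne_zero) ht he₃ he₄⟩
  let imI : ℍ[ℚ, -((D:ℚ)*N), (p:ℚ)] →ₗ[ℤ] ℚ := (QuaternionAlgebra.imIₗ ..).restrictScalars ℤ
  have hker := Submodule.span_insert_inf_ker_eq (f := imI) (v := e₂) (S := {1, e₃, e₄})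
    (by simp [imI, he₂]) (by rintro _ (rfl | rfl | rfl) <;> simp [imI, he₃, he₄])
  have hμ_perp (β : ℍ[ℚ, -((D:ℚ)*N), (p:ℚ)]) : qtr (β * star μ) = 0 ↔ imI β = 0 := by
    rw [hμ, qtr_mul_star_I]
    simp [imI, hD.ne', hN.ne']
  rw [he₁, Set.insert_comm, ← hker]
  ext β
  simp only [Set.mem_ofPred_eq, SetLike.mem_coe, Submodule.mem_inf, LinearMap.mem_ker, hμ_perp]

/-- In the case `Q = 4Q′` (`DN ≡ 3 (mod 4)`, `p` an odd prime with `p ∤ DN`, `s` odd,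
`4pt = s²DN + 1`), with `𝒪 = ℤe₁ + ℤe₂ + ℤe₃ + ℤe₄` and `μ = I`, the set
`μ^⊥ = {β ∈ 𝒪 : tr(βμ̄) = 0}` equals `ℤ·1 + ℤe₃ + ℤe₄`, and for all integers `x, y` one has
`tr(xe₃ + ye₄)² − 4·nr(xe₃ + ye₄) = 4px² + 4sDNxy + 4tDNy²`; in particular the quadratic
form `Q_μ(x, y) = disc(xe₃ + ye₄)` equals `4px² + 4sDNxy + 4tDNy²`. -/
theorem stmt6 (D N p : ℕ) (hD : 0 < D) (hN : 0 < N)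
    (hDN4 : (D * N) % 4 = 3) (hp : p.Prime) (hpodd : p ≠ 2) (hpDN : ¬ (p ∣ D * N))
    (s t : ℤ) (hs : Odd s) (ht : 4 * (p : ℤ) * t = s ^ 2 * D * N + 1)
    (e₁ e₂ e₃ e₄ μ : ℍ[ℚ, -((D:ℚ)*N), (p:ℚ)])
    (he₁ : e₁ = 1)
    (he₂ : e₂ = ⟨1/2, 1/2, 0, 0⟩)
    (he₃ : e₃ = ⟨0, 0, 1, 0⟩)
    (he₄ : e₄ = ⟨0, 0, (s:ℚ)*D*N/(2*p), 1/(2*p)⟩)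
    (hμ : μ = ⟨0, 1, 0, 0⟩) :
    {β : ℍ[ℚ, -((D:ℚ)*N), (p:ℚ)] |
        β ∈ Submodule.span ℤ ({e₁, e₂, e₃, e₄} : Set _) ∧ qtr (β * star μ) = 0}
      = (Submodule.span ℤ ({1, e₃, e₄} : Set (ℍ[ℚ, -((D:ℚ)*N), (p:ℚ)])) : Set _) ∧
    ∀ x y : ℤ, qtr (x • e₃ + y • e₄) ^ 2 - 4 * qnr D N p (x • e₃ + y • e₄)
      = 4 * (p:ℚ) * x ^ 2 + 4 * s * D * N * (x * y) + 4 * t * D * N * y ^ 2 :=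
  stmt6_general D N p hD hN hp s t ht e₁ e₂ e₃ e₄ μ he₁ he₂ he₃ he₄ hμ
end

section
/- Let D, N, p be positive integers and s an integer. For every z in the complex upper half-plane (Im z > 0), the matrix τ_z defined by the case-2 period formulas is symmetric with positive definite imaginary part, i.e., τ_z lies in the Siegel upper half-space ℍ₂. -/
/-! With `A = DN`, `B = 1 / |z|²` and `y = Im z`, each entry of `τ_z` has the shape
`(a z² + b z + c) / (d z) = (a z + b + c z⁻¹) / d` with real `a, b, c, d`, and `Im z⁻¹ = -B y`.
Hence `Im τ₁ = (A + B) y / 4`, `Im τ₂ = (B - A) y / (4√p)`, `Im τ₃ = (A + B) y / (4p)`, so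
`det (Im τ_z) = ((A + B)² - (A - B)²) y² / (16 p) = A B y² / (4p) > 0`; together with
`Im τ₁ > 0` this makes the symmetric matrix `Im τ_z` positive definite. -/

theorem Complex.im_quadratic_div_ofReal_mul (a b c d : ℝ) (z : ℂ) :
    ((a * z ^ 2 + b * z + c) / (d * z)).im = (a - c / normSq z) * z.im / d := by
  rcases eq_or_ne z 0 with rfl | hz
  · simp
  have hsplit : (a * z ^ 2 + b * z + c) / (d * z) = (a * z + b + c * z⁻¹) / d := by
    field_simp
  rw [hsplit, div_ofReal_im]
  simp only [add_im, mul_im, ofReal_re, ofReal_im, zero_mul, add_zero, inv_im, inv_re]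
  ring

open Matrix in
theorem Matrix.posDef_fin_two_of {𝕜 : Type*} [Field 𝕜] [LinearOrder 𝕜] [IsStrictOrderedRing 𝕜]
    [StarRing 𝕜] [TrivialStar 𝕜] {a b c : 𝕜} (ha : 0 < a) (hdet : 0 < a * c - b ^ 2) :
    (!![a, b; b, c] : Matrix (Fin 2) (Fin 2) 𝕜).PosDef := by
  refine .of_dotProduct_mulVec_pos ?_ fun x hx => ?_
  · ext i j; fin_cases i <;> fin_cases j <;> simp
  have hsquare : a * (star x ⬝ᵥ (!![a, b; b, c] *ᵥ x)) =
      (a * x 0 + b * x 1) ^ 2 + (a * c - b ^ 2) * x 1 ^ 2 := by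
    simp only [star_trivial, dotProduct, Fin.sum_univ_two, mulVec, of_apply, cons_val',
      cons_val_zero, cons_val_one, empty_val', cons_val_fin_one]
    ring
  refine pos_of_mul_pos_right (hsquare ▸ ?_) ha.le
  rcases eq_or_ne (x 1) 0 with h1 | h1
  · have h0 : x 0 ≠ 0 := fun h0 => hx (funext fun i => by fin_cases i <;> assumption)
    simp only [h1, mul_zero, add_zero]
    positivity
  · positivity

/-- Let `D, N, p` be positive integers and `s` an integer.  For `z` in the complex upper
half-plane, the matrix `τ_z` defined by the case-2 period formulas
`τ₁ = (DNz² + 2z − 1)/(4z)`, `τ₂ = −(DNz² + 1)/(4√p z)`,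
`τ₃ = (DNz² − 2sDNz − 1)/(4pz)` is symmetric with positive definite imaginary part,
i.e. `τ_z` lies in the Siegel upper half-space `ℍ₂`. -/
theorem stmt11 (D N p : ℕ) (hD : 0 < D) (hN : 0 < N) (hp : 0 < p) (s : ℤ)
    (z : ℂ) (hz : 0 < z.im)
    (τ₁ τ₂ τ₃ : ℂ)
    (h₁ : τ₁ = ((D:ℂ) * N * z ^ 2 + 2 * z - 1) / (4 * z))
    (h₂ : τ₂ = -((D:ℂ) * N * z ^ 2 + 1) / (4 * (Real.sqrt p : ℂ) * z))
    (h₃ : τ₃ = ((D:ℂ) * N * z ^ 2 - 2 * (s:ℂ) * D * N * z - 1) / (4 * (p:ℂ) * z)) :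
    (!![τ₁, τ₂; τ₂, τ₃] : Matrix (Fin 2) (Fin 2) ℂ).IsSymm ∧
    ((!![τ₁, τ₂; τ₂, τ₃] : Matrix (Fin 2) (Fin 2) ℂ).map Complex.im).PosDef := by
  set A : ℝ := D * N
  set B : ℝ := (Complex.normSq z)⁻¹
  have hA : 0 < A := by positivity
  have hB : 0 < B := inv_pos.2 (Complex.normSq_pos.2 fun h => by simp [h] at hz)
  have hp' : (0 : ℝ) < p := by positivity
  have him₁ : τ₁.im = (A + B) * z.im / 4 := by
    rw [h₁]
    convert Complex.im_quadratic_div_ofReal_mul A 2 (-1) 4 z using 2 <;>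
      push_cast [A, B] <;> ring
  have him₂ : τ₂.im = (B - A) * z.im / (4 * √p) := by
    rw [h₂]
    convert Complex.im_quadratic_div_ofReal_mul (-A) 0 (-1) (4 * √p) z using 2 <;>
      push_cast [A, B] <;> ring
  have him₃ : τ₃.im = (A + B) * z.im / (4 * p) := by
    rw [h₃]
    convert Complex.im_quadratic_div_ofReal_mul A (-2 * s * A) (-1) (4 * p) z using 2 <;>
      push_cast [A, B] <;> ring
  have hdet : τ₁.im * τ₃.im - τ₂.im ^ 2 = A * B * z.im ^ 2 / (4 * p) := by
    rw [him₁, him₂, him₃, div_pow, mul_pow 4, Real.sq_sqrt hp'.le]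
    field_simp
    ring
  have him : (!![τ₁, τ₂; τ₂, τ₃] : Matrix (Fin 2) (Fin 2) ℂ).map Complex.im =
      !![τ₁.im, τ₂.im; τ₂.im, τ₃.im] := by
    ext i j; fin_cases i <;> fin_cases j <;> rfl
  refine ⟨by ext i j; fin_cases i <;> fin_cases j <;> rfl, him ▸ Matrix.posDef_fin_two_of ?_ ?_⟩
  · rw [him₁]; positivity
  · rw [hdet]; positivity
end
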